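/- arXiv:2005.09490 — 4 statements merged into one kernel-verified Lean document; each statement's English description precedes it below -/
import Mathlib

section
/- Let n ≥ 2 and let M_n ⊆ ℕ^{2n} be the submonoid of all tuples (a_1,…,a_{2n}) of nonnegative integers satisfying Σ_{j=1}^{n} (n+1−j)·a_{2j−1} = Σ_{j=1}^{n} j·a_{2j}. Then M_n is not a free commutative monoid; i.e., there is no subset of M_n that freely generates M_n. -/
/-!
Every nonzero `a ∈ M` has a nonzero even and a nonzero odd coordinate (both sides of the defining
equation have positive coefficients), so its coordinate sum is at least `2`. Hence elements of
coordinate sum `2` or `3` are atoms of `M`, and atoms must belong to any free generating set.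
With `e_i` the (0-indexed) basis vectors, the atoms satisfy
`(e_0 + e_1 + e_{2n-3}) + (e_2 + e_{2n-2} + e_{2n-1})`
`  = (e_0 + e_{2n-1}) + (e_2 + e_{2n-3}) + (e_1 + e_{2n-2})`,
two different factorizations, which contradicts freeness.
-/

open Finsupp

section FreelyGenerates

variable {A : Type*} [AddCommMonoid A] {M : AddSubmonoid A} {S : Set A}

def AddSubmonoid.FreelyGenerates (M : AddSubmonoid A) (S : Set A) : Prop :=
  S ⊆ M ∧ ∀ x ∈ M, ∃! c : S →₀ ℕ, linearCombination ℕ (↑) c = x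

namespace AddSubmonoid.FreelyGenerates

theorem linearCombination_mem (hS : M.FreelyGenerates S) (c : S →₀ ℕ) :
    linearCombination ℕ (↑) c ∈ M := by
  rw [linearCombination_apply]
  exact AddSubmonoidClass.finsuppSum_mem _ _ _ fun s _ => nsmul_mem (hS.1 s.2) _

theorem linearCombination_injective (hS : M.FreelyGenerates S) :
    Function.Injective (linearCombination ℕ ((↑) : S → A)) := fun _ c' h =>
  (hS.2 _ (hS.linearCombination_mem c')).unique h rfl

theorem zero_notMem (hS : M.FreelyGenerates S) : (0 : A) ∉ S := fun h0 => by
  have := hS.linearCombination_injective (a₁ := single (⟨0, h0⟩ : S) 1) (a₂ := 0) (by simp)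
  simp at this

theorem mem_of_irreducible (hS : M.FreelyGenerates S) {x : A} (hx : x ∈ M) (hx0 : x ≠ 0)
    (hirr : ∀ a ∈ M, ∀ b ∈ M, a + b = x → a = 0 ∨ b = 0) : x ∈ S := by
  obtain ⟨c, rfl, -⟩ := hS.2 x hx
  obtain ⟨s, hs⟩ : c.support.Nonempty := by
    rw [Finset.nonempty_iff_ne_empty, Ne, support_eq_empty]
    rintro rfl
    exact hx0 (map_zero _)
  have hc : c = single s 1 + (c - single s 1) := by
    rw [add_tsub_cancel_of_le (single_le_iff.2 (Nat.one_le_iff_ne_zero.2 (mem_support_iff.1 hs)))]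
  rw [hc, map_add, linearCombination_single, one_smul] at hirr ⊢
  rcases hirr s (hS.1 s.2) _ (hS.linearCombination_mem _) rfl with h | h
  · exact absurd (h ▸ s.2) hS.zero_notMem
  · simp [h]

theorem mem_of_lt_four (hS : M.FreelyGenerates S) (φ : A →+ ℕ)
    (hφ : ∀ a ∈ M, a ≠ 0 → 2 ≤ φ a) {x : A} (hx : x ∈ M) (hx0 : x ≠ 0) (hx4 : φ x < 4) :
    x ∈ S := by
  refine hS.mem_of_irreducible hx hx0 fun a ha b hb hab => ?_
  by_contra! h
  have := hφ a ha h.1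
  have := hφ b hb h.2
  rw [← hab, map_add] at hx4
  omega

theorem add_ne_add (hS : M.FreelyGenerates S) {s t u y : A} (hs : s ∈ S) (ht : t ∈ S)
    (hu : u ∈ S) (hst : s ≠ t) (hsu : s ≠ u) (hy : y ∈ M) : s + y ≠ t + u := by
  intro h
  obtain ⟨d, rfl, -⟩ := hS.2 y hy
  have key := hS.linearCombination_injective (a₁ := single (⟨s, hs⟩ : S) 1 + d)
    (a₂ := single ⟨t, ht⟩ 1 + single ⟨u, hu⟩ 1) (by simpa using h)
  have := DFunLike.congr_fun key ⟨s, hs⟩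
  simp [hst.symm, hsu.symm] at this

end AddSubmonoid.FreelyGenerates

end FreelyGenerates

def coordSum (ι : Type*) [Fintype ι] : (ι → ℕ) →+ ℕ where
  toFun a := ∑ i, a i
  map_zero' := by simp
  map_add' a b := by simp [Finset.sum_add_distrib]

@[simp]
theorem coordSum_single {ι : Type*} [Fintype ι] [DecidableEq ι] (i : ι) :
    coordSum ι (Pi.single i 1) = 1 := by
  simp [coordSum]

namespace WeightMonoid

variable {n : ℕ}

def evenIdx (j : Fin n) : Fin (2 * n) := ⟨2 * j, by omega⟩

def oddIdx (j : Fin n) : Fin (2 * n) := ⟨2 * j + 1, by omega⟩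

theorem evenIdx_injective : Function.Injective (evenIdx (n := n)) := fun j k h => by
  simpa [evenIdx, Fin.ext_iff] using h

theorem oddIdx_injective : Function.Injective (oddIdx (n := n)) := fun j k h => by
  simpa [oddIdx, Fin.ext_iff] using h

theorem evenIdx_ne_oddIdx (j k : Fin n) : evenIdx j ≠ oddIdx k := by
  simp only [evenIdx, oddIdx, ne_eq, Fin.ext_iff]
  omega

theorem evenIdx_or_oddIdx (i : Fin (2 * n)) : (∃ j, i = evenIdx j) ∨ ∃ j, i = oddIdx j := by
  obtain ⟨m, hm | hm⟩ := Nat.even_or_odd' i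
  · exact .inl ⟨⟨m, by omega⟩, Fin.ext hm⟩
  · exact .inr ⟨⟨m, by omega⟩, Fin.ext hm⟩

variable (n) in
def leftWeight : (Fin (2 * n) → ℕ) →+ ℕ where
  toFun a := ∑ j : Fin n, (n - j) * a (evenIdx j)
  map_zero' := by simp
  map_add' a b := by simp [mul_add, Finset.sum_add_distrib]

variable (n) in
def rightWeight : (Fin (2 * n) → ℕ) →+ ℕ where
  toFun a := ∑ j : Fin n, (j + 1) * a (oddIdx j)
  map_zero' := by simp
  map_add' a b := by simp [mul_add, Finset.sum_add_distrib]

theorem leftWeight_eq_zero_iff {a : Fin (2 * n) → ℕ} :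
    leftWeight n a = 0 ↔ ∀ j, a (evenIdx j) = 0 := by
  simp only [leftWeight, AddMonoidHom.coe_mk, ZeroHom.coe_mk, Finset.sum_eq_zero_iff,
    Finset.mem_univ, true_imp_iff, mul_eq_zero]
  exact forall_congr' fun j => or_iff_right (by omega)

theorem rightWeight_eq_zero_iff {a : Fin (2 * n) → ℕ} :
    rightWeight n a = 0 ↔ ∀ j, a (oddIdx j) = 0 := by
  simp [rightWeight, Finset.sum_eq_zero_iff]

theorem two_le_coordSum {a : Fin (2 * n) → ℕ} (ha : a ≠ 0)
    (hw : leftWeight n a = rightWeight n a) : 2 ≤ coordSum _ a := by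
  have hleft : leftWeight n a ≠ 0 := by
    intro h0
    refine ha (funext fun i => ?_)
    rcases evenIdx_or_oddIdx i with ⟨j, rfl⟩ | ⟨j, rfl⟩
    · exact leftWeight_eq_zero_iff.1 h0 j
    · exact rightWeight_eq_zero_iff.1 (hw ▸ h0) j
  obtain ⟨j, hj⟩ := not_forall.1 (mt leftWeight_eq_zero_iff.2 hleft)
  obtain ⟨k, hk⟩ := not_forall.1 (mt rightWeight_eq_zero_iff.2 (hw ▸ hleft))
  calc 2 ≤ a (evenIdx j) + a (oddIdx k) := by omega
    _ = ∑ i ∈ {evenIdx j, oddIdx k}, a i := (Finset.sum_pair (evenIdx_ne_oddIdx j k)).symm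
    _ ≤ coordSum _ a := Finset.sum_le_sum_of_subset (Finset.subset_univ _)

def evenVec (j : Fin n) : Fin (2 * n) → ℕ := Pi.single (evenIdx j) 1

def oddVec (j : Fin n) : Fin (2 * n) → ℕ := Pi.single (oddIdx j) 1

@[simp] theorem coordSum_evenVec (j : Fin n) : coordSum _ (evenVec j) = 1 := coordSum_single _

@[simp] theorem coordSum_oddVec (j : Fin n) : coordSum _ (oddVec j) = 1 := coordSum_single _

@[simp] theorem leftWeight_evenVec (j : Fin n) : leftWeight n (evenVec j) = n - j := by
  simp [leftWeight, evenVec, Pi.single_apply, evenIdx_injective.eq_iff]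

@[simp] theorem leftWeight_oddVec (j : Fin n) : leftWeight n (oddVec j) = 0 :=
  leftWeight_eq_zero_iff.2 fun k => by simp [oddVec, (evenIdx_ne_oddIdx k j)]

@[simp] theorem rightWeight_evenVec (j : Fin n) : rightWeight n (evenVec j) = 0 :=
  rightWeight_eq_zero_iff.2 fun k => by simp [evenVec, (evenIdx_ne_oddIdx j k).symm]

@[simp] theorem rightWeight_oddVec (j : Fin n) : rightWeight n (oddVec j) = j + 1 := by
  simp [rightWeight, oddVec, Pi.single_apply, oddIdx_injective.eq_iff]

end WeightMonoid

open AddSubmonoid WeightMonoid in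
/-- The weight monoid of `SL(2n+1)/(Sp(2n)×ℂ^×)` in fundamental-weight
coordinates is not a freely generated commutative monoid for `n ≥ 2`. -/
theorem stmt_0 (n : ℕ) (hn : 2 ≤ n)
    (M : AddSubmonoid (Fin (2 * n) → ℕ))
    (hM : ∀ a : Fin (2 * n) → ℕ, a ∈ M ↔
      ∑ j : Fin n, (n - (j : ℕ)) * a ⟨2 * (j : ℕ), by have := j.isLt; omega⟩ =
      ∑ j : Fin n, ((j : ℕ) + 1) * a ⟨2 * (j : ℕ) + 1, by have := j.isLt; omega⟩) :
    ¬ ∃ S : Set (Fin (2 * n) → ℕ), S ⊆ (M : Set (Fin (2 * n) → ℕ)) ∧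
      ∀ x ∈ M, ∃! c : S →₀ ℕ,
        (c.sum fun s k => k • (s : Fin (2 * n) → ℕ)) = x := by
  rintro ⟨S, hSM, hfree⟩
  have hS : M.FreelyGenerates S := ⟨hSM, by simpa only [Finsupp.linearCombination_apply]⟩
  have hM' : ∀ a, a ∈ M ↔ leftWeight n a = rightWeight n a := hM
  have small_mem : ∀ x ∈ M, coordSum _ x ∈ ({2, 3} : Set ℕ) → x ∈ S := fun x hx hx23 =>
    hS.mem_of_lt_four (coordSum _) (fun a ha ha0 => two_le_coordSum ha0 ((hM' a).1 ha)) hx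
      (by rintro rfl; simp at hx23) (by simp at hx23; omega)
  let j₀ : Fin n := ⟨0, by omega⟩
  let j₁ : Fin n := ⟨1, by omega⟩
  let k₂ : Fin n := ⟨n - 2, by omega⟩
  let k₁ : Fin n := ⟨n - 1, by omega⟩
  have ht₁ := small_mem (evenVec j₀ + oddVec j₀ + oddVec k₂)
    ((hM' _).2 (by simp [j₀, k₂]; omega)) (by simp)
  have ht₂ := small_mem (evenVec j₁ + evenVec k₁ + oddVec k₁)
    ((hM' _).2 (by simp [j₁, k₁]; omega)) (by simp)
  have hq₀ := small_mem (evenVec j₀ + oddVec k₁)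
    ((hM' _).2 (by simp [j₀, k₁]; omega)) (by simp)
  have hq₁₂ : evenVec j₁ + oddVec k₂ + (oddVec j₀ + evenVec k₁) ∈ M :=
    (hM' _).2 (by simp [j₁, j₀, k₂, k₁]; omega)
  refine hS.add_ne_add hq₀ ht₁ ht₂ ?_ ?_ hq₁₂ (by abel)
  all_goals exact ne_of_apply_ne (coordSum _) (by simp)
end

section
/- Let r ≥ 1, s ≥ 0, F the free commutative monoid on g_0, g_1, …, g_r, h_1, …, h_s, and Γ_0 ⊆ F the submonoid generated by g_0+g_1, g_2, …, g_r. Call x ∈ F bottom if x cannot be written as y + σ with y ∈ F and σ ∈ Γ_0 nonzero. Then every x ∈ F admits a decomposition x = b + σ with b bottom and σ ∈ Γ_0, and this decomposition is unique. -/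
/-!
For `r ≥ 1`, `Γ₀` consists of the `σ` with no `h`-part and equal coefficients at `g₀` and `g₁`.
Hence every `x` has a largest element `γ x` of `Γ₀` below it: take `min x₀ x₁` at `g₀` and `g₁`
and `xⱼ` at `gⱼ` for `j ≥ 2`. Being bottom means `γ b = 0`, and `γ (x + σ) = γ x + σ` for
`σ ∈ Γ₀`. So `x = (x - γ x) + γ x` is a decomposition, and any decomposition `x = b + σ` has
`γ x = γ b + σ = σ`.
-/

/-- The free commutative monoid on generators `g_0, …, g_r, h_1, …, h_s`. -/
abbrev FreeMon (r s : ℕ) := (Fin (r + 1) → ℕ) × (Fin s → ℕ)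

/-- The generator `g_i`. -/
def gGen (r s : ℕ) (i : Fin (r + 1)) : FreeMon r s := (Pi.single i 1, 0)

/-- The submonoid `Γ₀` generated by `g_0 + g_1, g_2, …, g_r`. -/
def Gamma0 (r s : ℕ) : AddSubmonoid (FreeMon r s) :=
  AddSubmonoid.closure
    ({gGen r s 0 + gGen r s 1} ∪ {x | ∃ i : Fin (r + 1), 2 ≤ (i : ℕ) ∧ x = gGen r s i})

/-- `x` is a bottom element: it is not of the form `y + σ` with `σ ∈ Γ₀` nonzero. -/
def IsBottom (r s : ℕ) (x : FreeMon r s) : Prop :=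
  ¬ ∃ σ ∈ Gamma0 r s, σ ≠ 0 ∧ ∃ y : FreeMon r s, x = y + σ

lemma Fin.two_le_val_iff {r : ℕ} {i : Fin (r + 2)} : 2 ≤ (i : ℕ) ↔ i ≠ 0 ∧ i ≠ 1 := by
  rw [Ne, Ne, Fin.ext_iff, Fin.ext_iff, Fin.val_zero, Fin.val_one]
  omega

lemma Fin.eq_zero_or_eq_one_or_two_le {r : ℕ} (i : Fin (r + 2)) : i = 0 ∨ i = 1 ∨ 2 ≤ (i : ℕ) := by
  by_cases hi : 2 ≤ (i : ℕ)
  · exact Or.inr (Or.inr hi)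
  · rw [Fin.two_le_val_iff] at hi
    tauto

section

variable {r s : ℕ}

lemma isBottom_iff_forall_le {x : FreeMon r s} :
    IsBottom r s x ↔ ∀ σ ∈ Gamma0 r s, σ ≤ x → σ = 0 := by
  simp only [IsBottom, le_iff_exists_add, add_comm _ (_ : FreeMon r s)]
  exact not_exists.trans <| forall_congr' fun σ => by tauto

lemma add_gGen_mem_Gamma0 : gGen r s 0 + gGen r s 1 ∈ Gamma0 r s :=
  AddSubmonoid.subset_closure (Set.mem_union_left _ rfl)

lemma gGen_mem_Gamma0 {i : Fin (r + 1)} (hi : 2 ≤ (i : ℕ)) : gGen r s i ∈ Gamma0 r s :=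
  AddSubmonoid.subset_closure (Set.mem_union_right _ ⟨i, hi, rfl⟩)

lemma mem_Gamma0_iff {σ : FreeMon (r + 1) s} :
    σ ∈ Gamma0 (r + 1) s ↔ σ.1 0 = σ.1 1 ∧ σ.2 = 0 := by
  constructor
  · intro hσ
    induction hσ using AddSubmonoid.closure_induction with
    | mem σ hσ =>
      rcases hσ with rfl | ⟨i, hi, rfl⟩
      · simp [gGen]
      · obtain ⟨hi0, hi1⟩ := Fin.two_le_val_iff.1 hi
        simp [gGen, hi0.symm, hi1.symm]
    | zero => simp
    | add σ τ _ _ hσ hτ => simp [hσ.1, hσ.2, hτ.1, hτ.2]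
  · rintro ⟨h01, h2⟩
    have hσ : σ = σ.1 0 • (gGen (r + 1) s 0 + gGen (r + 1) s 1) +
        ∑ i ∈ Finset.univ.filter (fun i : Fin (r + 2) => 2 ≤ (i : ℕ)), σ.1 i • gGen (r + 1) s i := by
      refine Prod.ext (funext fun j => ?_) (by simp [h2, gGen, Prod.snd_sum])
      rcases j.eq_zero_or_eq_one_or_two_le with rfl | rfl | hj
      · simp [gGen, Prod.fst_sum, Finset.sum_apply, Pi.single_apply]
      · simp [gGen, Prod.fst_sum, Finset.sum_apply, Pi.single_apply, h01]
      · obtain ⟨hj0, hj1⟩ := Fin.two_le_val_iff.1 hj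
        simp [gGen, Prod.fst_sum, Finset.sum_apply, Pi.single_apply, hj, hj0, hj1]
    rw [hσ]
    exact add_mem (nsmul_mem add_gGen_mem_Gamma0 _)
      (sum_mem fun i hi => nsmul_mem (gGen_mem_Gamma0 (Finset.mem_filter.1 hi).2) _)

def gammaPart (x : FreeMon (r + 1) s) : FreeMon (r + 1) s :=
  (fun j => if 2 ≤ (j : ℕ) then x.1 j else min (x.1 0) (x.1 1), 0)

lemma gammaPart_mem (x : FreeMon (r + 1) s) : gammaPart x ∈ Gamma0 (r + 1) s :=
  mem_Gamma0_iff.2 ⟨by simp [gammaPart], rfl⟩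

lemma gammaPart_le (x : FreeMon (r + 1) s) : gammaPart x ≤ x := by
  refine ⟨fun j => ?_, zero_le⟩
  rcases j.eq_zero_or_eq_one_or_two_le with rfl | rfl | hj
  · simp [gammaPart]
  · simp [gammaPart]
  · simp [gammaPart, hj]

lemma le_gammaPart {σ x : FreeMon (r + 1) s} (hσ : σ ∈ Gamma0 (r + 1) s) (hσx : σ ≤ x) :
    σ ≤ gammaPart x := by
  obtain ⟨h01, h2⟩ := mem_Gamma0_iff.1 hσ
  refine ⟨fun j => ?_, h2.le⟩
  have hmin : σ.1 0 ≤ min (x.1 0) (x.1 1) := le_min (hσx.1 0) (h01 ▸ hσx.1 1)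
  rcases j.eq_zero_or_eq_one_or_two_le with rfl | rfl | hj
  · simpa [gammaPart] using hmin
  · simpa [gammaPart, h01] using hmin
  · simp [gammaPart, hj, hσx.1 j]

lemma gammaPart_add_of_mem (x : FreeMon (r + 1) s) {σ : FreeMon (r + 1) s}
    (hσ : σ ∈ Gamma0 (r + 1) s) : gammaPart (x + σ) = gammaPart x + σ := by
  obtain ⟨h01, h2⟩ := mem_Gamma0_iff.1 hσ
  refine Prod.ext (funext fun j => ?_) (by simp [gammaPart, h2])
  rcases j.eq_zero_or_eq_one_or_two_le with rfl | rfl | hj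
  · simp [gammaPart, h01, min_add_add_right]
  · simp [gammaPart, h01, min_add_add_right]
  · simp [gammaPart, hj]

lemma isBottom_iff_gammaPart_eq_zero {x : FreeMon (r + 1) s} :
    IsBottom (r + 1) s x ↔ gammaPart x = 0 := by
  rw [isBottom_iff_forall_le]
  exact ⟨fun h => h _ (gammaPart_mem x) (gammaPart_le x),
    fun h σ hσ hσx => le_zero_iff.1 (h ▸ le_gammaPart hσ hσx)⟩

lemma sub_gammaPart_add_gammaPart (x : FreeMon (r + 1) s) : x - gammaPart x + gammaPart x = x :=
  tsub_add_cancel_of_le (gammaPart_le x)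

lemma isBottom_sub_gammaPart (x : FreeMon (r + 1) s) : IsBottom (r + 1) s (x - gammaPart x) := by
  have h := gammaPart_add_of_mem (x - gammaPart x) (gammaPart_mem x)
  rw [sub_gammaPart_add_gammaPart, right_eq_add] at h
  exact isBottom_iff_gammaPart_eq_zero.2 h

lemma gammaPart_add_of_isBottom {b σ : FreeMon (r + 1) s} (hb : IsBottom (r + 1) s b)
    (hσ : σ ∈ Gamma0 (r + 1) s) : gammaPart (b + σ) = σ := by
  rw [gammaPart_add_of_mem b hσ, isBottom_iff_gammaPart_eq_zero.1 hb, zero_add]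

end

/-- Every element of the free monoid decomposes uniquely as `b + σ` with `b`
bottom and `σ ∈ Γ₀`. -/
theorem stmt_2 (r s : ℕ) (hr : 1 ≤ r) (x : FreeMon r s) :
    ∃! p : FreeMon r s × FreeMon r s,
      IsBottom r s p.1 ∧ p.2 ∈ Gamma0 r s ∧ x = p.1 + p.2 := by
  obtain ⟨r, rfl⟩ := Nat.exists_eq_add_of_le' hr
  refine ⟨(x - gammaPart x, gammaPart x),
    ⟨isBottom_sub_gammaPart x, gammaPart_mem x, (sub_gammaPart_add_gammaPart x).symm⟩, ?_⟩
  rintro ⟨b, σ⟩ ⟨hb, hσ, rfl⟩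
  simp [gammaPart_add_of_isBottom hb hσ]
end

section
/- Let r ≥ 1, s ≥ 0, and let A be the free abelian group on g_0, g_1, …, g_r, h_1, …, h_s. Suppose x = a_0 g_0 + a_1 g_1 + Σ_j b_j h_j and x′ = a_0′ g_0 + a_1′ g_1 + Σ_j b_j′ h_j with all coefficients in ℕ, min(a_0, a_1) = 0 and min(a_0′, a_1′) = 0. If x − x′ lies in the ℤ-span of {g_0+g_1, g_2, …, g_r}, then x = x′. -/
/-- The free abelian group on generators `g_0, …, g_r, h_1, …, h_s`. -/
abbrev FreeAb (r s : ℕ) := (Fin (r + 1) → ℤ) × (Fin s → ℤ)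

/-- The generator `g_i`. -/
def gGenZ (r s : ℕ) (i : Fin (r + 1)) : FreeAb r s := (Pi.single i 1, 0)

/-- The generator `h_j`. -/
def hGenZ (r s : ℕ) (j : Fin s) : FreeAb r s := (0, Pi.single j 1)

/-!
The homomorphism `z ↦ (z_{g_0} - z_{g_1}, (z_{h_j})_j)` kills `g_0 + g_1` and
`g_2, …, g_r`, hence the whole lattice they span. On a bottom element it reads off
`(a_0 - a_1, b)`, and `a_0 - a_1` determines `(a_0, a_1)` once `min a_0 a_1 = 0`.
-/

theorem Nat.eq_and_eq_of_min_eq_zero_of_intCast_sub_eq {a b c d : ℕ} (hab : min a b = 0)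
    (hcd : min c d = 0) (h : (a : ℤ) - b = c - d) : a = c ∧ b = d := by
  omega

namespace FreeAb

variable {r s : ℕ}

def weightLattice (r s : ℕ) : AddSubgroup (FreeAb r s) :=
  AddSubgroup.closure ({gGenZ r s 0 + gGenZ r s 1} ∪
    {z | ∃ i : Fin (r + 1), 2 ≤ (i : ℕ) ∧ z = gGenZ r s i})

def bottomInvariant (r s : ℕ) : FreeAb r s →+ ℤ × (Fin s → ℤ) :=
  AddMonoidHom.mk' (fun z => (z.1 0 - z.1 1, z.2)) fun _ _ =>
    Prod.ext (add_sub_add_comm _ _ _ _) rfl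

@[simp]
theorem bottomInvariant_apply (z : FreeAb r s) : bottomInvariant r s z = (z.1 0 - z.1 1, z.2) :=
  rfl

theorem weightLattice_le_ker_bottomInvariant [NeZero r] :
    weightLattice r s ≤ (bottomInvariant r s).ker := by
  refine (AddSubgroup.closure_le _).2 ?_
  rintro _ (rfl | ⟨i, hi, rfl⟩)
  · simp [gGenZ]
  · have hi0 : (0 : Fin (r + 1)) ≠ i := fun h => by simp [← h] at hi
    have hi1 : (1 : Fin (r + 1)) ≠ i := fun h => by
      have := Nat.mod_le 1 (r + 1)
      rw [← h, Fin.val_one'] at hi; omega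
    simp [gGenZ, Pi.single_eq_of_ne hi0, Pi.single_eq_of_ne hi1]

theorem bottomInvariant_bottom [NeZero r] (a₀ a₁ : ℕ) (b : Fin s → ℕ) :
    bottomInvariant r s (a₀ • gGenZ r s 0 + a₁ • gGenZ r s 1 + ∑ j, b j • hGenZ r s j) =
      ((a₀ : ℤ) - a₁, fun j => (b j : ℤ)) := by
  ext j
  · simp [gGenZ, hGenZ, Prod.fst_sum]
  · simp [gGenZ, hGenZ, Prod.snd_sum, Finset.sum_apply, Pi.single_apply]

end FreeAb

/-- Two "bottom" elements supported on `g_0, g_1` and the `h_j`'s whose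
difference lies in the ℤ-span of `{g_0+g_1, g_2, …, g_r}` must coincide. -/
theorem stmt_3 (r s : ℕ) (hr : 1 ≤ r)
    (a₀ a₁ a₀' a₁' : ℕ) (b b' : Fin s → ℕ)
    (hmin : min a₀ a₁ = 0) (hmin' : min a₀' a₁' = 0)
    (x x' : FreeAb r s)
    (hx : x = a₀ • gGenZ r s 0 + a₁ • gGenZ r s 1 + ∑ j, b j • hGenZ r s j)
    (hx' : x' = a₀' • gGenZ r s 0 + a₁' • gGenZ r s 1 + ∑ j, b' j • hGenZ r s j)
    (hdiff : x - x' ∈ AddSubgroup.closure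
      ({gGenZ r s 0 + gGenZ r s 1} ∪
        {z | ∃ i : Fin (r + 1), 2 ≤ (i : ℕ) ∧ z = gGenZ r s i})) :
    x = x' := by
  have : NeZero r := NeZero.of_pos hr
  have hker : FreeAb.bottomInvariant r s (x - x') = 0 :=
    FreeAb.weightLattice_le_ker_bottomInvariant hdiff
  rw [map_sub, sub_eq_zero, hx, hx', FreeAb.bottomInvariant_bottom, FreeAb.bottomInvariant_bottom,
    Prod.mk.injEq] at hker
  obtain ⟨rfl, rfl⟩ := Nat.eq_and_eq_of_min_eq_zero_of_intCast_sub_eq hmin hmin' hker.1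
  obtain rfl : b = b' := funext fun j => by exact_mod_cast congrFun hker.2 j
  rw [hx, hx']
end

section
/- Let Γ ⊆ ℕ² × ℤ be the submonoid generated by the three elements (1,0,0), (1,0,−1), (0,1,−1). Then: (a) an element (x, y, −3) lies in Γ if and only if 0 ≤ y ≤ 3 and x + y ≥ 3; (b) the elements of Γ with last coordinate −3 that cannot be written as (1,0,0) + γ with γ ∈ Γ are exactly the four elements (3,0,−3), (2,1,−3), (1,2,−3), (0,3,−3). -/
/-! Writing `(x, y, z) = a (1,0,0) + b (1,0,-1) + c (0,1,-1)` forces `c = y`, `b = -(y + z)` and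
`a = x + y + z`, so `Γ` is cut out by `y + z ≤ 0 ≤ x + y + z`. Subtracting `(1,0,0)` lowers
`x + y + z` by one, so the bottom of the well at level `z` is the segment `x + y + z = 0`. -/

theorem AddSubmonoid.mem_closure_triple {A : Type*} [AddCommMonoid A] (a b c d : A) :
    d ∈ closure ({a, b, c} : Set A) ↔ ∃ l m n : ℕ, l • a + m • b + n • c = d := by
  rw [← Set.singleton_union, closure_union, mem_sup]
  simp_rw [mem_closure_singleton, mem_closure_pair, exists_exists_eq_and,
    exists_exists_exists_and_eq, add_assoc]

def extWeightMonoid : AddSubmonoid (ℕ × ℕ × ℤ) :=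
  AddSubmonoid.closure {(1, 0, 0), (1, 0, -1), (0, 1, -1)}

theorem mem_extWeightMonoid_iff (x y : ℕ) (z : ℤ) :
    (x, y, z) ∈ extWeightMonoid ↔ y + z ≤ 0 ∧ 0 ≤ x + y + z := by
  simp only [extWeightMonoid, AddSubmonoid.mem_closure_triple, Prod.smul_mk, Prod.mk_add_mk,
    Prod.mk.injEq, smul_eq_mul, nsmul_eq_mul]
  constructor
  · rintro ⟨l, m, n, rfl, rfl, rfl⟩
    push_cast
    omega
  · rintro ⟨h₁, h₂⟩
    refine ⟨(x + y + z).toNat, (-(y + z)).toNat, y, ?_, ?_, ?_⟩ <;> omega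

theorem mem_extWeightMonoid_and_not_mem_add_iff (x y : ℕ) (z : ℤ) :
    ((x, y, z) ∈ extWeightMonoid ∧
      ¬ ∃ γ ∈ extWeightMonoid, (x, y, z) = ((1 : ℕ), (0 : ℕ), (0 : ℤ)) + γ) ↔
      y + z ≤ 0 ∧ x + y + z = 0 := by
  have h_shift : (∃ γ ∈ extWeightMonoid, (x, y, z) = ((1 : ℕ), (0 : ℕ), (0 : ℤ)) + γ) ↔
      0 < x ∧ (x - 1, y, z) ∈ extWeightMonoid := by
    constructor
    · rintro ⟨⟨a, b, c⟩, hγ, h⟩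
      simp only [Prod.mk_add_mk, Prod.mk.injEq] at h
      obtain ⟨rfl, rfl, rfl⟩ := h
      simpa using hγ
    · rintro ⟨hx, hmem⟩
      refine ⟨_, hmem, ?_⟩
      simp only [Prod.mk_add_mk, Prod.mk.injEq]
      omega
  rw [h_shift, mem_extWeightMonoid_iff, mem_extWeightMonoid_iff]
  omega

/-- The extended weight monoid of `G₂/P_{α₁}` for the pair `(G₂, SL(3))`:
(a) describes the `3ϖ₁`-well, (b) its bottom. -/
theorem stmt_4 (Γ : AddSubmonoid (ℕ × ℕ × ℤ))
    (hΓ : Γ = AddSubmonoid.closure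
      ({(1, 0, 0), (1, 0, -1), (0, 1, -1)} : Set (ℕ × ℕ × ℤ))) :
    (∀ x y : ℕ, (x, y, (-3 : ℤ)) ∈ Γ ↔ (y ≤ 3 ∧ 3 ≤ x + y)) ∧
    (∀ x y : ℕ,
      ((x, y, (-3 : ℤ)) ∈ Γ ∧
        ¬ ∃ γ ∈ Γ, (x, y, (-3 : ℤ)) = ((1 : ℕ), (0 : ℕ), (0 : ℤ)) + γ) ↔
      ((x, y) = (3, 0) ∨ (x, y) = (2, 1) ∨ (x, y) = (1, 2) ∨ (x, y) = (0, 3))) := by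
  obtain rfl : Γ = extWeightMonoid := hΓ
  refine ⟨fun x y => ?_, fun x y => ?_⟩
  · rw [mem_extWeightMonoid_iff]
    omega
  · rw [mem_extWeightMonoid_and_not_mem_add_iff]
    simp only [Prod.mk.injEq]
    omega
end
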